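/- arXiv:2208.02389 — 2 statements merged into one kernel-verified Lean document; each statement's English description precedes it below -/
import Mathlib

section
/- In the risk-aware linear bandit model, for any policy π the expected proxy regret satisfies E[R̂_π(T)] ≤ Σ_{a∈A} E[τ_a(T)]·(Δ_a + Γ_{a,*}²) + σ_{a*}², where Γ_{a,*} = μ_a − μ_{a*} and σ_{a*}² is the variance of the optimal action a*. -/
open MeasureTheory ProbabilityTheory Matrix Finset
open scoped BigOperators NNReal

noncomputable section

/-- The squared ℓ₂-norm of a vector in ℝ^d. -/
def sqNorm {d : ℕ} (a : Fin d → ℝ) : ℝ := ∑ i, a i ^ 2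

/-- The design matrix `∑_{a ∈ A} Q(a) · a aᵀ` of a weighting `Q` on `A`. -/
def designMat {d : ℕ} (A : Finset (Fin d → ℝ)) (Q : (Fin d → ℝ) → ℝ) :
    Matrix (Fin d) (Fin d) ℝ :=
  ∑ a ∈ A, Q a • vecMulVec a a

/-- The G-value `g(Q) = max_{a ∈ A} aᵀ (∑_{b ∈ A} Q(b) b bᵀ)⁻¹ a` of a design. -/
def gVal {d : ℕ} (A : Finset (Fin d → ℝ)) (Q : (Fin d → ℝ) → ℝ) : ℝ :=
  if h : A.Nonempty then A.sup' h fun a => a ⬝ᵥ ((designMat A Q)⁻¹ *ᵥ a) else 0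

/-- `Q` is a probability distribution supported on the finite action set `A`. -/
structure IsDesign {d : ℕ} (A : Finset (Fin d → ℝ)) (Q : (Fin d → ℝ) → ℝ) : Prop where
  nonneg : ∀ a, 0 ≤ Q a
  support : ∀ a, a ∉ A → Q a = 0
  sum_one : ∑ a ∈ A, Q a = 1

/-- `Q` is a G-optimal design on `A`: a probability distribution on `A`
minimizing the G-value. -/
structure IsGOptimal {d : ℕ} (A : Finset (Fin d → ℝ)) (Q : (Fin d → ℝ) → ℝ)
    extends IsDesign A Q : Prop where
  minimal : ∀ Q', IsDesign A Q' → gVal A Q ≤ gVal A Q'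

/-- The risk-aware linear bandit model. -/
structure BanditModel (d : ℕ) where
  /-- the finite action set `A ⊆ ℝ^d` -/
  A : Finset (Fin d → ℝ)
  A_nonempty : A.Nonempty
  /-- every action has ℓ₂-norm at most `1` -/
  norm_le : ∀ a ∈ A, sqNorm a ≤ 1
  /-- unknown mean parameter `θ*` -/
  θ : Fin d → ℝ
  /-- unknown variance parameter `φ*` -/
  φ : Fin d → ℝ
  /-- the known constant `ω > 0` -/
  ω : ℝ
  ω_pos : 0 < ω
  /-- `‖θ*‖₂ ≤ 1` -/
  θ_norm : sqNorm θ ≤ 1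
  /-- `‖φ*‖₂ ≤ ω` -/
  φ_norm : sqNorm φ ≤ ω ^ 2
  /-- `σ²_min` -/
  σ2min : ℝ
  /-- `σ²_max` -/
  σ2max : ℝ
  /-- `f(⟨φ*, a⟩) = ⟨φ*, a⟩ + ω ∈ [σ²_min, σ²_max]` for all actions -/
  var_mem : ∀ a ∈ A, φ ⬝ᵥ a + ω ∈ Set.Icc σ2min σ2max
  /-- risk tolerance `ρ ≥ 0` -/
  ρ : ℝ
  ρ_nonneg : 0 ≤ ρ

namespace BanditModel

variable {d : ℕ} (M : BanditModel d)

/-- expected reward `μ_a = ⟨a, θ*⟩` -/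
def mean (a : Fin d → ℝ) : ℝ := a ⬝ᵥ M.θ

/-- reward variance `σ_a² = ⟨φ*, a⟩ + ω` -/
def var (a : Fin d → ℝ) : ℝ := M.φ ⬝ᵥ a + M.ω

/-- mean-variance value `σ_a² − ρ μ_a` -/
def mv (a : Fin d → ℝ) : ℝ := M.var a - M.ρ * M.mean a

/-- mean-reward gap `Γ_{a,b} = μ_a − μ_b` -/
def gap (a b : Fin d → ℝ) : ℝ := M.mean a - M.mean b

end BanditModel

/-- The mean-variance objective `ξ(T)` of the reward sequence `x` over horizon `T`:
`∑_{t<T} (x_t − (1/T) ∑_{s<T} x_s)² − ρ ∑_{t<T} x_t`. -/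
def mvObj (ρ : ℝ) (T : ℕ) (x : ℕ → ℝ) : ℝ :=
  (∑ t ∈ Finset.range T, (x t - (∑ s ∈ Finset.range T, x s) / T) ^ 2)
    - ρ * ∑ t ∈ Finset.range T, x t

/-- The pre-sampled noise table `η` consists of independent Gaussian noises
`η_t(a) ∼ N(0, f(⟨φ*, a⟩))`. -/
structure IsNoise {d : ℕ} (M : BanditModel d) {Ω : Type} [MeasurableSpace Ω]
    (P : Measure Ω) (η : ℕ → (Fin d → ℝ) → Ω → ℝ) : Prop where
  meas : ∀ t a, Measurable (η t a)
  gauss : ∀ t, ∀ a ∈ M.A,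
    Measure.map (η t a) P = gaussianReal 0 (Real.toNNReal (M.var a))
  indep : iIndepFun
    (fun p : ℕ × {a // a ∈ M.A} => η p.1 p.2.1) P

/-- number of times action `a` is played by `act` during the first `T` rounds -/
def playCount {d : ℕ} {Ω : Type} (act : ℕ → Ω → Fin d → ℝ) (T : ℕ)
    (a : Fin d → ℝ) (ω : Ω) : ℝ :=
  ∑ t ∈ Finset.range T, if act t ω = a then (1 : ℝ) else 0

/-- `n_a = ⌈C² d² log d log²(1/δ) g(Q) Q(a) / ε²⌉`: the exploration counts of RISE. -/
def riseCount {d : ℕ} (A : Finset (Fin d → ℝ)) (Q : (Fin d → ℝ) → ℝ)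
    (C ε δ : ℝ) (a : Fin d → ℝ) : ℕ :=
  ⌈C ^ 2 * d ^ 2 * Real.log d * Real.log (1 / δ) ^ 2 * gVal A Q * Q a / ε ^ 2⌉₊

/-- the design matrix `V_n = ∑_{s<n} A_s A_sᵀ` accumulated during exploration -/
def riseV {d : ℕ} (plan : ℕ → Fin d → ℝ) (n : ℕ) : Matrix (Fin d) (Fin d) ℝ :=
  ∑ s ∈ Finset.range n, vecMulVec (plan s) (plan s)

/-- the least-squares estimate `θ̂_n = V_n⁻¹ ∑_{s<n} X_s A_s` -/
def riseTheta {d : ℕ} {Ω : Type} (plan : ℕ → Fin d → ℝ) (n : ℕ)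
    (X : ℕ → Ω → ℝ) (ω : Ω) : Fin d → ℝ :=
  (riseV plan n)⁻¹ *ᵥ ∑ s ∈ Finset.range n, X s ω • plan s

/-- the least-squares estimate
`φ̂_n = V_n⁻¹ ∑_{s<n} f⁻¹((X_s − ⟨θ̂_n, A_s⟩)²) A_s`, where `f⁻¹(y) = y − ω` -/
def risePhi {d : ℕ} {Ω : Type} (M : BanditModel d) (plan : ℕ → Fin d → ℝ) (n : ℕ)
    (X : ℕ → Ω → ℝ) (ω : Ω) : Fin d → ℝ :=
  (riseV plan n)⁻¹ *ᵥ
    ∑ s ∈ Finset.range n,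
      ((X s ω - plan s ⬝ᵥ riseTheta plan n X ω) ^ 2 - M.ω) • plan s

/-- A (history-adapted) policy: at each time `t` it maps the history
`(A_1, X_1, …, A_t, X_t)` to the next action. -/
def Policy (d : ℕ) : Type :=
  (t : ℕ) → (Fin t → (Fin d → ℝ) × ℝ) → (Fin d → ℝ)

/-- The history of action/reward pairs generated by running policy `π` against
the noise table `η` in environment with mean parameter `θ`. -/
def polHist {d : ℕ} {Ω : Type} (θ : Fin d → ℝ)
    (η : ℕ → (Fin d → ℝ) → Ω → ℝ) (π : Policy d) (ω : Ω) :
    (t : ℕ) → Fin t → (Fin d → ℝ) × ℝ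
  | 0 => fun i => i.elim0
  | t + 1 =>
      Fin.snoc (polHist θ η π ω t)
        (π t (polHist θ η π ω t),
          π t (polHist θ η π ω t) ⬝ᵥ θ + η t (π t (polHist θ η π ω t)) ω)

/-- The action played by policy `π` at time `t`. -/
def polAct {d : ℕ} {Ω : Type} (θ : Fin d → ℝ)
    (η : ℕ → (Fin d → ℝ) → Ω → ℝ) (π : Policy d) (ω : Ω) (t : ℕ) : Fin d → ℝ :=
  π t (polHist θ η π ω t)

/-- The reward received by policy `π` at time `t`. -/
def polX {d : ℕ} {Ω : Type} (θ : Fin d → ℝ)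
    (η : ℕ → (Fin d → ℝ) → Ω → ℝ) (π : Policy d) (ω : Ω) (t : ℕ) : ℝ :=
  polAct θ η π ω t ⬝ᵥ θ + η t (polAct θ η π ω t) ω

/-!
Write `ξ(T) = ∑ X_t² - (∑ X_t)² / T - ρ ∑ X_t`. The action `A_t` of the policy is a measurable
function of the noise of the rounds before `t`, hence independent of every `η_t(a)`; therefore
`E X_t = ∑_a P(A_t = a) μ_a` and `E X_t² = ∑_a P(A_t = a) (μ_a² + σ_a²)`, and dropping
`Var(∑ X_t) ≥ 0` bounds `E ξ_π(T)` from above in terms of `N_a = E τ_a(T)`. For `π̂*` the rewards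
are independent, so `E ξ_{π̂*}(T) = (T - 1) σ_{a*}² - ρ T μ_{a*}` exactly. Since `∑_a N_a = T`, the
remaining gap is `(∑_a N_a μ_a - T μ_{a*})² / T ≥ 0`.
-/

lemma select_eq_sum_indicator {Ω α : Type*} {s : Finset α} {g : Ω → α} (Y : α → Ω → ℝ)
    (hgs : ∀ ω, g ω ∈ s) (ω : Ω) : Y (g ω) ω = ∑ a ∈ s, (g ⁻¹' {a}).indicator (Y a) ω := by
  rw [Finset.sum_eq_single_of_mem (g ω) (hgs ω)]
  · simp
  · intro a _ ha
    simp [Set.indicator, Ne.symm ha]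

section Select

variable {Ω α : Type*} [MeasurableSpace Ω] [MeasurableSpace α] [MeasurableSingletonClass α]
  {P : Measure Ω} {s : Finset α} {g : Ω → α} {Y : α → Ω → ℝ}

lemma Measurable.select (hg : Measurable g) (hgs : ∀ ω, g ω ∈ s)
    (hY : ∀ a ∈ s, Measurable (Y a)) : Measurable fun ω => Y (g ω) ω := by
  simp_rw [select_eq_sum_indicator Y hgs]
  exact Finset.measurable_sum _ fun a ha =>
    (hY a ha).indicator (hg (measurableSet_singleton a))

lemma MemLp.select {p : ENNReal} (hg : Measurable g) (hgs : ∀ ω, g ω ∈ s)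
    (hY : ∀ a ∈ s, MemLp (Y a) p P) : MemLp (fun ω => Y (g ω) ω) p P := by
  simp_rw [select_eq_sum_indicator Y hgs]
  exact memLp_finsetSum _ fun a ha =>
    (hY a ha).indicator (hg (measurableSet_singleton a))

lemma integral_select_of_indepFun [IsFiniteMeasure P] (hg : Measurable g) (hgs : ∀ ω, g ω ∈ s)
    (hY : ∀ a ∈ s, Integrable (Y a) P) (hind : ∀ a ∈ s, IndepFun g (Y a) P) :
    ∫ ω, Y (g ω) ω ∂P = ∑ a ∈ s, P.real (g ⁻¹' {a}) * ∫ ω, Y a ω ∂P := by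
  simp_rw [select_eq_sum_indicator Y hgs]
  rw [integral_finsetSum _ fun a ha => (hY a ha).indicator (hg (measurableSet_singleton a))]
  refine Finset.sum_congr rfl fun a ha => ?_
  have hmeas : Measurable (({a} : Set α).indicator (1 : α → ℝ)) :=
    measurable_one.indicator (measurableSet_singleton a)
  calc ∫ ω, (g ⁻¹' {a}).indicator (Y a) ω ∂P
      = ∫ ω, ({a} : Set α).indicator 1 (g ω) * Y a ω ∂P := by
        congr 1; ext ω; by_cases h : g ω = a <;> simp [Set.indicator, h]
    _ = P.real (g ⁻¹' {a}) * ∫ ω, Y a ω ∂P := by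
        have hind' : IndepFun (fun ω => ({a} : Set α).indicator (1 : α → ℝ) (g ω)) (Y a) P :=
          (hind a ha).comp hmeas measurable_id
        rw [hind'.integral_fun_mul_eq_mul_integral (hmeas.comp hg).aestronglyMeasurable
          (hY a ha).aestronglyMeasurable, ← integral_indicator_one (hg (measurableSet_singleton a))]
        rfl

end Select

section PlayCount

variable {d : ℕ} {Ω : Type} [MeasurableSpace Ω] {P : Measure Ω} {act : ℕ → Ω → Fin d → ℝ}

lemma integral_playCount [IsFiniteMeasure P] (hact : ∀ t, Measurable (act t)) (T : ℕ)
    (a : Fin d → ℝ) :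
    ∫ ω, playCount act T a ω ∂P = ∑ t ∈ Finset.range T, P.real (act t ⁻¹' {a}) := by
  have hset : ∀ t, MeasurableSet (act t ⁻¹' {a}) := fun t => hact t (measurableSet_singleton a)
  have hind : ∀ t ω, (if act t ω = a then (1 : ℝ) else 0) = (act t ⁻¹' {a}).indicator 1 ω :=
    fun t ω => by by_cases h : act t ω = a <;> simp [h]
  simp only [playCount, hind]
  rw [integral_finsetSum _ fun t _ => (integrable_const 1).indicator (hset t)]
  exact Finset.sum_congr rfl fun t _ => integral_indicator_one (hset t)

lemma sum_mul_integral_playCount [IsFiniteMeasure P] (hact : ∀ t, Measurable (act t))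
    (s : Finset (Fin d → ℝ)) (T : ℕ) (f : (Fin d → ℝ) → ℝ) :
    ∑ a ∈ s, (∫ ω, playCount act T a ω ∂P) * f a
      = ∑ t ∈ Finset.range T, ∑ a ∈ s, P.real (act t ⁻¹' {a}) * f a := by
  simp only [integral_playCount hact, Finset.sum_mul]
  exact Finset.sum_comm

lemma sum_integral_playCount [IsProbabilityMeasure P] (hact : ∀ t, Measurable (act t))
    {s : Finset (Fin d → ℝ)} (hs : ∀ t ω, act t ω ∈ s) (T : ℕ) :
    ∑ a ∈ s, ∫ ω, playCount act T a ω ∂P = T := by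
  have hone : ∀ t, ∑ a ∈ s, P.real (act t ⁻¹' {a}) = 1 := fun t => by
    rw [sum_measureReal_preimage_singleton s fun a _ => hact t (measurableSet_singleton a),
      Set.preimage_eq_univ_iff.mpr fun _ ⟨ω, hω⟩ => hω ▸ hs t ω, probReal_univ]
  simpa [hone] using sum_mul_integral_playCount (P := P) hact s T fun _ => 1

end PlayCount

lemma Measurable.finSnoc {Ω β : Type*} [MeasurableSpace Ω] [MeasurableSpace β] {n : ℕ}
    {f : Ω → Fin n → β} {g : Ω → β} (hf : Measurable f) (hg : Measurable g) :
    Measurable fun ω => (Fin.snoc (f ω) (g ω) : Fin (n + 1) → β) := by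
  refine measurable_pi_iff.mpr fun i => ?_
  induction i using Fin.lastCases with
  | last => simpa using hg
  | cast i =>
    simp only [Fin.snoc_castSucc]
    exact (measurable_pi_apply i).comp hf

lemma mvObj_eq (ρ : ℝ) (T : ℕ) (x : ℕ → ℝ) :
    mvObj ρ T x = ∑ t ∈ Finset.range T, x t ^ 2
      - (∑ t ∈ Finset.range T, x t) ^ 2 / T - ρ * ∑ t ∈ Finset.range T, x t := by
  rcases Nat.eq_zero_or_pos T with rfl | hT
  · simp [mvObj]
  have hT' : (T : ℝ) ≠ 0 := by positivity
  simp only [mvObj, sub_sq, Finset.sum_add_distrib, Finset.sum_sub_distrib, ← Finset.sum_mul,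
    ← Finset.mul_sum, Finset.sum_const, Finset.card_range, nsmul_eq_mul]
  field_simp
  ring

lemma integral_mvObj {Ω : Type*} [MeasurableSpace Ω] {P : Measure Ω} [IsProbabilityMeasure P]
    (ρ : ℝ) (T : ℕ) {x : ℕ → Ω → ℝ} (hx : ∀ t, MemLp (x t) 2 P) :
    ∫ ω, mvObj ρ T (fun t => x t ω) ∂P
      = ∑ t ∈ Finset.range T, ∫ ω, x t ω ^ 2 ∂P
        - (Var[∑ t ∈ Finset.range T, x t; P] + (∑ t ∈ Finset.range T, ∫ ω, x t ω ∂P) ^ 2) / T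
        - ρ * ∑ t ∈ Finset.range T, ∫ ω, x t ω ∂P := by
  have hsum : MemLp (∑ t ∈ Finset.range T, x t) 2 P := memLp_finsetSum' _ fun t _ => hx t
  have hint : ∀ t, Integrable (x t) P := fun t => (hx t).integrable one_le_two
  have hsq : ∀ t, Integrable (fun ω => x t ω ^ 2) P := fun t => (hx t).integrable_sq
  have hS : MemLp (fun ω => ∑ t ∈ Finset.range T, x t ω) 2 P := memLp_finsetSum _ fun t _ => hx t
  have hSsq : Integrable (fun ω => ∑ t ∈ Finset.range T, x t ω ^ 2) P :=
    integrable_finsetSum _ fun t _ => hsq t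
  rw [variance_eq_sub hsum]
  simp only [mvObj_eq, Finset.sum_apply, Pi.pow_apply]
  rw [integral_sub, integral_sub, integral_div, integral_const_mul,
    integral_finsetSum _ fun t _ => hint t, integral_finsetSum _ fun t _ => hsq t]
  · ring
  exacts [hSsq, hS.integrable_sq.div_const _, hSsq.sub (hS.integrable_sq.div_const _),
    (hS.integrable one_le_two).const_mul _]

lemma sum_mul_sq_sub_sq_div_le {ι : Type*} (s : Finset ι) (w x : ι → ℝ) (hw : 0 < ∑ i ∈ s, w i)
    (c : ℝ) :
    ∑ i ∈ s, w i * x i ^ 2 - (∑ i ∈ s, w i * x i) ^ 2 / ∑ i ∈ s, w i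
      ≤ ∑ i ∈ s, w i * (x i - c) ^ 2 := by
  set W := ∑ i ∈ s, w i
  set S := ∑ i ∈ s, w i * x i
  have hexpand : ∑ i ∈ s, w i * (x i - c) ^ 2 = ∑ i ∈ s, w i * x i ^ 2 - 2 * c * S + c ^ 2 * W := by
    simp only [S, W, Finset.mul_sum, ← Finset.sum_sub_distrib, ← Finset.sum_add_distrib]
    exact Finset.sum_congr rfl fun i _ => by ring
  have hsq : (S - c * W) ^ 2 / W = S ^ 2 / W - 2 * c * S + c ^ 2 * W := by
    field_simp
    ring
  have := div_nonneg (sq_nonneg (S - c * W)) hw.le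
  linarith

section PolicyHistory

variable {d : ℕ} {θ : Fin d → ℝ} {π : Policy d}

lemma polHist_congr {A : Set (Fin d → ℝ)} (hπ : ∀ t h, π t h ∈ A) {Ω Ω' : Type}
    {η : ℕ → (Fin d → ℝ) → Ω → ℝ} {η' : ℕ → (Fin d → ℝ) → Ω' → ℝ} {ω : Ω} {ω' : Ω'} :
    ∀ t, (∀ s < t, ∀ a ∈ A, η s a ω = η' s a ω') → polHist θ η π ω t = polHist θ η' π ω' t
  | 0, _ => funext fun i => i.elim0
  | t + 1, h => by
    have ih := polHist_congr hπ t fun s hs => h s (by omega)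
    simp only [polHist, ih, h t (by omega) _ (hπ _ _)]

lemma measurable_polHist {A : Finset (Fin d → ℝ)} (hπ : ∀ t h, π t h ∈ A)
    (hπ_meas : ∀ t, Measurable (π t)) {Ω : Type} [MeasurableSpace Ω]
    {η : ℕ → (Fin d → ℝ) → Ω → ℝ} (hη : ∀ t, ∀ a ∈ A, Measurable (η t a)) :
    ∀ t, Measurable fun ω => polHist θ η π ω t
  | 0 => measurable_const
  | t + 1 => by
    have hact := (hπ_meas t).comp (measurable_polHist hπ hπ_meas hη t)
    have hmean : Measurable fun a : Fin d → ℝ => a ⬝ᵥ θ := by fun_prop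
    exact (measurable_polHist hπ hπ_meas hη t).finSnoc <| hact.prodMk <|
      (hmean.comp hact).add (hact.select (fun _ => hπ _ _) (hη t))

lemma measurable_polAct {A : Finset (Fin d → ℝ)} (hπ : ∀ t h, π t h ∈ A)
    (hπ_meas : ∀ t, Measurable (π t)) {Ω : Type} [MeasurableSpace Ω]
    {η : ℕ → (Fin d → ℝ) → Ω → ℝ} (hη : ∀ t, ∀ a ∈ A, Measurable (η t a)) (t : ℕ) :
    Measurable fun ω => polAct θ η π ω t :=
  (hπ_meas t).comp (measurable_polHist hπ hπ_meas hη t)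

lemma indepFun_polAct_noise {A : Finset (Fin d → ℝ)} (hπ : ∀ t h, π t h ∈ A)
    (hπ_meas : ∀ t, Measurable (π t)) {Ω : Type} [MeasurableSpace Ω] {P : Measure Ω}
    {η : ℕ → (Fin d → ℝ) → Ω → ℝ} (hη : ∀ t a, Measurable (η t a))
    (hind : iIndepFun (fun p : ℕ × {a // a ∈ A} => η p.1 p.2.1) P) (t : ℕ) {a : Fin d → ℝ}
    (ha : a ∈ A) : IndepFun (fun ω => polAct θ η π ω t) (η t a) P := by
  classical
  let S : Finset (ℕ × {a // a ∈ A}) := Finset.range t ×ˢ Finset.univ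
  let R : Finset (ℕ × {a // a ∈ A}) := {(t, ⟨a, ha⟩)}
  have hSR : Disjoint S R := by simp [S, R]
  -- the noise of the rounds before `t`, as a noise table on the sample space `S → ℝ`
  let ηS : ℕ → (Fin d → ℝ) → (S → ℝ) → ℝ := fun s b w =>
    if h : s < t ∧ b ∈ A then w ⟨(s, ⟨b, h.2⟩), by simp [S, h.1]⟩ else 0
  have hηS : ∀ s, ∀ b ∈ A, Measurable (ηS s b) := by
    intro s b _
    unfold ηS
    split_ifs <;> fun_prop
  have hact : (fun ω => polAct θ η π ω t)
      = (fun w => π t (polHist θ ηS π w t)) ∘ fun ω (i : S) => η i.1.1 i.1.2 ω :=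
    funext fun ω => congrArg (π t) <| polHist_congr (A := A) hπ t fun s hs b hb => by
      simp [ηS, hs, Finset.mem_coe.mp hb]
  have hnoise : η t a = (fun w : R → ℝ => w ⟨(t, ⟨a, ha⟩), Finset.mem_singleton_self _⟩)
      ∘ fun ω (i : R) => η i.1.1 i.1.2 ω := rfl
  rw [hact, hnoise]
  exact (hind.indepFun_finset S R hSR fun p => hη p.1 p.2.1).comp
    ((hπ_meas t).comp (measurable_polHist hπ hπ_meas hηS t)) (measurable_pi_apply _)

end PolicyHistory

namespace BanditModel

variable {d : ℕ} (M : BanditModel d)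

lemma var_nonneg {a : Fin d → ℝ} (ha : a ∈ M.A) : 0 ≤ M.var a := by
  have hcs : (M.φ ⬝ᵥ a) ^ 2 ≤ M.ω ^ 2 :=
    calc (M.φ ⬝ᵥ a) ^ 2 ≤ sqNorm M.φ * sqNorm a := Finset.sum_mul_sq_le_sq_mul_sq _ _ _
      _ ≤ M.ω ^ 2 * 1 :=
        mul_le_mul M.φ_norm (M.norm_le a ha) (by unfold sqNorm; positivity) (sq_nonneg _)
      _ = M.ω ^ 2 := mul_one _
  have := M.ω_pos
  rw [var]
  nlinarith

lemma sum_mul_regret_term (N : (Fin d → ℝ) → ℝ) (b : Fin d → ℝ) :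
    ∑ a ∈ M.A, N a * ((M.mv a - M.mv b) + M.gap a b ^ 2)
      = ∑ a ∈ M.A, N a * M.var a - M.ρ * ∑ a ∈ M.A, N a * M.mean a
        - (∑ a ∈ M.A, N a) * M.mv b + ∑ a ∈ M.A, N a * (M.mean a - M.mean b) ^ 2 := by
  simp only [Finset.mul_sum, Finset.sum_mul, ← Finset.sum_sub_distrib, ← Finset.sum_add_distrib]
  exact Finset.sum_congr rfl fun a _ => by simp only [mv, gap]; ring

end BanditModel

namespace IsNoise

variable {d : ℕ} {M : BanditModel d} {Ω : Type} [MeasurableSpace Ω] {P : Measure Ω}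
  {η : ℕ → (Fin d → ℝ) → Ω → ℝ} {a : Fin d → ℝ}

lemma hasLaw (hη : IsNoise M P η) (ha : a ∈ M.A) (t : ℕ) :
    HasLaw (η t a) (gaussianReal 0 (M.var a).toNNReal) P :=
  ⟨(hη.meas t a).aemeasurable, hη.gauss t a ha⟩

lemma memLp (hη : IsNoise M P η) (ha : a ∈ M.A) (t : ℕ) : MemLp (η t a) 2 P := by
  have h := memLp_id_gaussianReal (μ := 0) (v := (M.var a).toNNReal) 2
  rw [← (hη.hasLaw ha t).map_eq, memLp_map_measure_iff aestronglyMeasurable_id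
    (hη.meas t a).aemeasurable] at h
  exact h

lemma integral_eq_zero (hη : IsNoise M P η) (ha : a ∈ M.A) (t : ℕ) : ∫ ω, η t a ω ∂P = 0 :=
  (hη.hasLaw ha t).integral_eq.trans integral_id_gaussianReal

lemma variance_eq (hη : IsNoise M P η) (ha : a ∈ M.A) (t : ℕ) : Var[η t a; P] = M.var a := by
  rw [(hη.hasLaw ha t).variance_eq, variance_id_gaussianReal, Real.coe_toNNReal _ (M.var_nonneg ha)]

variable [IsProbabilityMeasure P]

lemma memLp_const_add (hη : IsNoise M P η) (ha : a ∈ M.A) (t : ℕ) (c : ℝ) :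
    MemLp (fun ω => c + η t a ω) 2 P :=
  (memLp_const c).add (hη.memLp ha t)

lemma integral_const_add (hη : IsNoise M P η) (ha : a ∈ M.A) (t : ℕ) (c : ℝ) :
    ∫ ω, c + η t a ω ∂P = c := by
  rw [integral_add (integrable_const c) ((hη.memLp ha t).integrable one_le_two),
    hη.integral_eq_zero ha, integral_const]
  simp

lemma integral_const_add_sq (hη : IsNoise M P η) (ha : a ∈ M.A) (t : ℕ) (c : ℝ) :
    ∫ ω, (c + η t a ω) ^ 2 ∂P = c ^ 2 + M.var a := by
  have h := variance_eq_sub (hη.memLp_const_add ha t c)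
  rw [variance_const_add (hη.meas t a).aestronglyMeasurable, hη.variance_eq ha,
    hη.integral_const_add ha] at h
  simp only [Pi.pow_apply] at h
  linarith

lemma integral_mvObj_const_action (hη : IsNoise M P η) (ha : a ∈ M.A) (ρ : ℝ) {T : ℕ}
    (hT : 0 < T) :
    ∫ ω, mvObj ρ T (fun t => a ⬝ᵥ M.θ + η t a ω) ∂P = (T - 1) * M.var a - ρ * (T * M.mean a) := by
  have hx : ∀ t, MemLp (fun ω => a ⬝ᵥ M.θ + η t a ω) 2 P :=
    fun t => hη.memLp_const_add ha t _
  have hpair : Set.Pairwise ↑(Finset.range T) fun s t =>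
      IndepFun (fun ω => a ⬝ᵥ M.θ + η s a ω) (fun ω => a ⬝ᵥ M.θ + η t a ω) P := by
    intro s _ t _ hst
    exact (hη.indep.indepFun (i := (s, ⟨a, ha⟩)) (j := (t, ⟨a, ha⟩)) (by simp [hst])).comp
      (measurable_const_add _) (measurable_const_add _)
  have hT' : (T : ℝ) ≠ 0 := by positivity
  rw [integral_mvObj ρ T hx, IndepFun.variance_sum (fun t _ => hx t) hpair]
  simp only [variance_const_add (hη.meas _ a).aestronglyMeasurable, hη.variance_eq ha,
    hη.integral_const_add_sq ha, hη.integral_const_add ha, Finset.sum_const, Finset.card_range,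
    nsmul_eq_mul, BanditModel.mean]
  field_simp
  ring

end IsNoise

section PolicyRewards

variable {d : ℕ} {M : BanditModel d} {Ω : Type} [MeasurableSpace Ω] {P : Measure Ω}
  [IsProbabilityMeasure P] {η : ℕ → (Fin d → ℝ) → Ω → ℝ} {π : Policy d}

lemma memLp_polX (hη : IsNoise M P η) (hπ : ∀ t h, π t h ∈ M.A)
    (hπ_meas : ∀ t, Measurable (π t)) (t : ℕ) : MemLp (fun ω => polX M.θ η π ω t) 2 P :=
  MemLp.select (Y := fun a ω => a ⬝ᵥ M.θ + η t a ω)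
    (measurable_polAct hπ hπ_meas (fun t a _ => hη.meas t a) t) (fun _ => hπ _ _)
    fun _ ha => hη.memLp_const_add ha t _

lemma integral_polX (hη : IsNoise M P η) (hπ : ∀ t h, π t h ∈ M.A)
    (hπ_meas : ∀ t, Measurable (π t)) (t : ℕ) :
    ∫ ω, polX M.θ η π ω t ∂P
      = ∑ a ∈ M.A, P.real ((fun ω => polAct M.θ η π ω t) ⁻¹' {a}) * M.mean a :=
  (integral_select_of_indepFun (Y := fun a ω => a ⬝ᵥ M.θ + η t a ω)
    (measurable_polAct hπ hπ_meas (fun t a _ => hη.meas t a) t) (fun _ => hπ _ _)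
    (fun _ ha => (hη.memLp_const_add ha t _).integrable one_le_two)
    fun _ ha => (indepFun_polAct_noise hπ hπ_meas hη.meas hη.indep t ha).comp measurable_id
      (measurable_const_add _)).trans <|
    Finset.sum_congr rfl fun _ ha => by rw [hη.integral_const_add ha]; rfl

lemma integral_polX_sq (hη : IsNoise M P η) (hπ : ∀ t h, π t h ∈ M.A)
    (hπ_meas : ∀ t, Measurable (π t)) (t : ℕ) :
    ∫ ω, polX M.θ η π ω t ^ 2 ∂P
      = ∑ a ∈ M.A, P.real ((fun ω => polAct M.θ η π ω t) ⁻¹' {a})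
          * (M.mean a ^ 2 + M.var a) :=
  (integral_select_of_indepFun (Y := fun a ω => (a ⬝ᵥ M.θ + η t a ω) ^ 2)
    (measurable_polAct hπ hπ_meas (fun t a _ => hη.meas t a) t) (fun _ => hπ _ _)
    (fun _ ha => (hη.memLp_const_add ha t _).integrable_sq)
    fun _ ha => (indepFun_polAct_noise hπ hπ_meas hη.meas hη.indep t ha).comp measurable_id
      ((measurable_const_add _).pow_const 2)).trans <|
    Finset.sum_congr rfl fun _ ha => by rw [hη.integral_const_add_sq ha]; rfl

lemma integral_mvObj_polX_le (hη : IsNoise M P η) (hπ : ∀ t h, π t h ∈ M.A)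
    (hπ_meas : ∀ t, Measurable (π t)) (ρ : ℝ) (T : ℕ) :
    ∫ ω, mvObj ρ T (fun t => polX M.θ η π ω t) ∂P
      ≤ ∑ a ∈ M.A, (∫ ω, playCount (fun t ω => polAct M.θ η π ω t) T a ω ∂P)
            * (M.mean a ^ 2 + M.var a)
        - (∑ a ∈ M.A, (∫ ω, playCount (fun t ω => polAct M.θ η π ω t) T a ω ∂P)
            * M.mean a) ^ 2 / T
        - ρ * ∑ a ∈ M.A, (∫ ω, playCount (fun t ω => polAct M.θ η π ω t) T a ω ∂P)
            * M.mean a := by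
  have hact := measurable_polAct (θ := M.θ) hπ hπ_meas (fun t a _ => hη.meas t a)
  rw [integral_mvObj ρ T (memLp_polX hη hπ hπ_meas), sum_mul_integral_playCount hact,
    sum_mul_integral_playCount hact]
  simp only [integral_polX hη hπ hπ_meas, integral_polX_sq hη hπ hπ_meas]
  gcongr
  exact le_add_of_nonneg_left (variance_nonneg _ _)

end PolicyRewards

theorem proxy_regret_decomposition_bound_general
    (d : ℕ) (M : BanditModel d) (T : ℕ)
    (Ω : Type) [MeasurableSpace Ω] (P : Measure Ω) [IsProbabilityMeasure P]
    (η : ℕ → (Fin d → ℝ) → Ω → ℝ) (hη : IsNoise M P η)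
    (π : Policy d) (hπ_mem : ∀ t h, π t h ∈ M.A) (hπ_meas : ∀ t, Measurable (π t))
    (astar : Fin d → ℝ) (hastar : astar ∈ M.A) :
    (∫ ω, mvObj M.ρ T (fun t => polX M.θ η π ω t) ∂P)
        - (∫ ω, mvObj M.ρ T (fun t => astar ⬝ᵥ M.θ + η t astar ω) ∂P)
      ≤ (∑ a ∈ M.A,
          (∫ ω, playCount (fun t ω => polAct M.θ η π ω t) T a ω ∂P)
            * ((M.mv a - M.mv astar) + M.gap a astar ^ 2))
        + M.var astar := by
  rcases Nat.eq_zero_or_pos T with rfl | hT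
  · simp [mvObj, playCount, M.var_nonneg hastar]
  set N := fun a => ∫ ω, playCount (fun t ω => polAct M.θ η π ω t) T a ω ∂P
  have hN : ∑ a ∈ M.A, N a = T :=
    sum_integral_playCount (measurable_polAct hπ_mem hπ_meas fun t a _ => hη.meas t a)
      (fun _ _ => hπ_mem _ _) T
  have hpol := integral_mvObj_polX_le hη hπ_mem hπ_meas M.ρ T
  have hstar := hη.integral_mvObj_const_action hastar M.ρ hT
  have hvar := sum_mul_sq_sub_sq_div_le M.A N M.mean (by rw [hN]; positivity) (M.mean astar)
  rw [hN] at hvar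
  rw [M.sum_mul_regret_term, hN]
  simp only [mul_add, Finset.sum_add_distrib] at hpol
  simp only [BanditModel.mv]
  linarith

/-- In the risk-aware linear bandit model, for any policy `π` the
expected proxy regret satisfies
`E[R̂_π(T)] ≤ ∑_{a∈A} E[τ_a(T)] (Δ_a + Γ_{a,*}²) + σ_{a*}²`,
where `E[R̂_π(T)] = E[ξ_π(T)] − E[ξ_{π̂*}(T)]`, `π̂*` always plays the
mean-variance optimal action `a*`, `Γ_{a,*} = μ_a − μ_{a*}` and `σ_{a*}²` is the
variance of `a*`. -/
theorem proxy_regret_decomposition_bound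
    (d : ℕ) (M : BanditModel d) (T : ℕ) (hT : 0 < T)
    (Ω : Type) [MeasurableSpace Ω] (P : Measure Ω) [IsProbabilityMeasure P]
    (η : ℕ → (Fin d → ℝ) → Ω → ℝ) (hη : IsNoise M P η)
    (π : Policy d) (hπ_mem : ∀ t h, π t h ∈ M.A) (hπ_meas : ∀ t, Measurable (π t))
    (astar : Fin d → ℝ) (hastar : astar ∈ M.A)
    (hopt : ∀ b ∈ M.A, M.mv astar ≤ M.mv b) :
    (∫ ω, mvObj M.ρ T (fun t => polX M.θ η π ω t) ∂P)
        - (∫ ω, mvObj M.ρ T (fun t => astar ⬝ᵥ M.θ + η t astar ω) ∂P)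
      ≤ (∑ a ∈ M.A,
          (∫ ω, playCount (fun t ω => polAct M.θ η π ω t) T a ω ∂P)
            * ((M.mv a - M.mv astar) + M.gap a astar ^ 2))
        + M.var astar :=
  proxy_regret_decomposition_bound_general d M T Ω P η hη π hπ_mem hπ_meas astar hastar
end
end

section
/- G-optimal exploration design bound: Let A ⊂ ℝ^d be a finite set of vectors, Q : A → [0,1] a probability distribution on A such that W = Σ_{a∈A} Q(a) a aᵀ is positive definite, and set g = max_{a∈A} aᵀ W⁻¹ a. Let c > 0, ε > 0, and let n : A → ℕ satisfy n_a ≥ c·g·Q(a)/ε² for all a ∈ A. Then V = Σ_{a∈A} n_a a aᵀ is positive definite and for every a ∈ A, aᵀ V⁻¹ a ≤ ε²/c. -/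
/-!
Put `k = c g / ε²`, positive unless every `a ∈ A` is `0` (a trivial case). The hypothesis
`n_a ≥ k Q(a)` says `k W ≤ V` in the Loewner order, so `V` is positive definite and
`k · aᵀ V⁻¹ a ≤ aᵀ W⁻¹ a ≤ g`, i.e. `aᵀ V⁻¹ a ≤ ε² / c`. The inverse comparison comes from the
variational formula `aᵀ M⁻¹ a = max_x (2 aᵀ x - xᵀ M x)`, applied with `M = W` at `x = k V⁻¹ a`.
-/

open Matrix

variable {m : Type*} [Fintype m]

theorem mulVec_nonsing_inv_mulVec_cancel [DecidableEq m] {R : Type*} [CommRing R]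
    {M : Matrix m m R} (hM : IsUnit M) (v : m → R) : M *ᵥ (M⁻¹ *ᵥ v) = v := by
  rw [mulVec_mulVec, mul_nonsing_inv _ ((isUnit_iff_isUnit_det M).1 hM), one_mulVec]

theorem posSemidef_sum_smul_vecMulVec_self_sub (A : Finset (m → ℝ)) {p q : (m → ℝ) → ℝ}
    (hpq : ∀ a ∈ A, p a ≤ q a) :
    (∑ a ∈ A, q a • vecMulVec a a - ∑ a ∈ A, p a • vecMulVec a a).PosSemidef := by
  rw [← Finset.sum_sub_distrib]
  refine posSemidef_sum A fun a ha => ?_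
  rw [← sub_smul]
  simpa using (posSemidef_vecMulVec_self_star a).smul (sub_nonneg.2 (hpq a ha))

theorem two_mul_dotProduct_sub_le_dotProduct_inv_mulVec [DecidableEq m] {M : Matrix m m ℝ}
    (hM : M.PosDef) (a x : m → ℝ) :
    2 * (a ⬝ᵥ x) - x ⬝ᵥ (M *ᵥ x) ≤ a ⬝ᵥ (M⁻¹ *ᵥ a) := by
  set y := M⁻¹ *ᵥ a
  have hMy : M *ᵥ y = a := mulVec_nonsing_inv_mulVec_cancel hM.isUnit a
  have hsymm : y ⬝ᵥ (M *ᵥ x) = x ⬝ᵥ (M *ᵥ y) := by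
    rw [dotProduct_mulVec, ← mulVec_transpose, ← conjTranspose_eq_transpose_of_trivial,
      hM.isHermitian.eq, dotProduct_comm]
  have := hM.posSemidef.dotProduct_mulVec_nonneg (x - y)
  simp only [star_trivial, mulVec_sub, dotProduct_sub, sub_dotProduct, hsymm, hMy] at this
  rw [dotProduct_comm x a, dotProduct_comm y a] at this
  linarith

theorem mul_dotProduct_inv_mulVec_le [DecidableEq m] {V W : Matrix m m ℝ} (hV : V.PosDef)
    (hW : W.PosDef) {k : ℝ} (hk : 0 ≤ k) (hWV : (V - k • W).PosSemidef) (a : m → ℝ) :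
    k * (a ⬝ᵥ (V⁻¹ *ᵥ a)) ≤ a ⬝ᵥ (W⁻¹ *ᵥ a) := by
  set y := V⁻¹ *ᵥ a
  have hVy : y ⬝ᵥ (V *ᵥ y) = a ⬝ᵥ y := by
    rw [mulVec_nonsing_inv_mulVec_cancel hV.isUnit, dotProduct_comm]
  have hWy : k * (y ⬝ᵥ (W *ᵥ y)) ≤ a ⬝ᵥ y := by
    have := hWV.dotProduct_mulVec_nonneg y
    simp only [star_trivial, sub_mulVec, smul_mulVec, dotProduct_sub, dotProduct_smul,
      smul_eq_mul, hVy] at this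
    linarith
  have hvar := two_mul_dotProduct_sub_le_dotProduct_inv_mulVec hW a (k • y)
  simp only [dotProduct_smul, smul_dotProduct, mulVec_smul, smul_eq_mul] at hvar
  nlinarith [mul_le_mul_of_nonneg_left hWy hk]

theorem g_optimal_exploration_bound_general {d : ℕ} (A : Finset (Fin d → ℝ))
    (hA : A.Nonempty) (Q : (Fin d → ℝ) → ℝ)
    (W : Matrix (Fin d) (Fin d) ℝ) (hW : W = ∑ a ∈ A, Q a • vecMulVec a a)
    (hWpd : W.PosDef)
    (g : ℝ) (hg : g = A.sup' hA fun a => a ⬝ᵥ (W⁻¹ *ᵥ a))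
    (c ε : ℝ) (hc : 0 < c) (hε : 0 < ε)
    (n : (Fin d → ℝ) → ℕ) (hn : ∀ a ∈ A, c * g * Q a / ε ^ 2 ≤ (n a : ℝ))
    (V : Matrix (Fin d) (Fin d) ℝ) (hV : V = ∑ a ∈ A, (n a : ℝ) • vecMulVec a a) :
    V.PosDef ∧ ∀ a ∈ A, a ⬝ᵥ (V⁻¹ *ᵥ a) ≤ ε ^ 2 / c := by
  have hle_g : ∀ a ∈ A, a ⬝ᵥ (W⁻¹ *ᵥ a) ≤ g := fun a ha =>
    hg ▸ A.le_sup' (fun a => a ⬝ᵥ (W⁻¹ *ᵥ a)) ha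
  by_cases hA0 : ∀ a ∈ A, a = 0
  · have hVW : V = W := by
      rw [hV, hW, Finset.sum_eq_zero fun a ha => by simp [hA0 a ha],
        Finset.sum_eq_zero fun a ha => by simp [hA0 a ha]]
    exact ⟨hVW ▸ hWpd, fun a ha => by
      rw [hA0 a ha, zero_dotProduct]; positivity⟩
  push Not at hA0
  obtain ⟨a₀, ha₀, ha₀_ne⟩ := hA0
  have hg_pos : 0 < g := lt_of_lt_of_le (by simpa using hWpd.inv.dotProduct_mulVec_pos ha₀_ne)
    (hle_g a₀ ha₀)
  set k := c * g / ε ^ 2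
  have hk : 0 < k := by positivity
  have hkW : (V - k • W).PosSemidef := by
    rw [hV, hW, Finset.smul_sum]
    simp_rw [smul_smul]
    exact posSemidef_sum_smul_vecMulVec_self_sub A fun a ha => by
      simpa [k, div_mul_eq_mul_div] using hn a ha
  have hVpd : V.PosDef := by simpa using (hWpd.smul hk).add_posSemidef hkW
  refine ⟨hVpd, fun a ha => ?_⟩
  calc a ⬝ᵥ (V⁻¹ *ᵥ a) ≤ g / k := (le_div_iff₀' hk).2 <|
        (mul_dotProduct_inv_mulVec_le hVpd hWpd hk.le hkW a).trans (hle_g a ha)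
    _ = ε ^ 2 / c := by simp only [k]; field_simp

/-- G-optimal exploration design bound.  Let `A ⊆ ℝ^d` be finite,
`Q` a probability distribution on `A` whose design matrix `W = ∑_a Q(a) a aᵀ` is
positive definite, and `g = max_{a∈A} aᵀ W⁻¹ a`.  If `n_a ≥ c g Q(a) / ε²` for
all `a ∈ A`, then `V = ∑_a n_a a aᵀ` is positive definite and
`aᵀ V⁻¹ a ≤ ε² / c` for every `a ∈ A`. -/
theorem g_optimal_exploration_bound {d : ℕ} (A : Finset (Fin d → ℝ))
    (hA : A.Nonempty) (Q : (Fin d → ℝ) → ℝ)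
    (hQ0 : ∀ a ∈ A, 0 ≤ Q a) (hQ1 : ∑ a ∈ A, Q a = 1)
    (W : Matrix (Fin d) (Fin d) ℝ) (hW : W = ∑ a ∈ A, Q a • vecMulVec a a)
    (hWpd : W.PosDef)
    (g : ℝ) (hg : g = A.sup' hA fun a => a ⬝ᵥ (W⁻¹ *ᵥ a))
    (c ε : ℝ) (hc : 0 < c) (hε : 0 < ε)
    (n : (Fin d → ℝ) → ℕ) (hn : ∀ a ∈ A, c * g * Q a / ε ^ 2 ≤ (n a : ℝ))
    (V : Matrix (Fin d) (Fin d) ℝ) (hV : V = ∑ a ∈ A, (n a : ℝ) • vecMulVec a a) :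
    V.PosDef ∧ ∀ a ∈ A, a ⬝ᵥ (V⁻¹ *ᵥ a) ≤ ε ^ 2 / c :=
  g_optimal_exploration_bound_general A hA Q W hW hWpd g hg c ε hc hε n hn V hV
end
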